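/- arXiv:0907.1958 — 2 statements merged into one kernel-verified Lean document; each statement's English description precedes it below -/
import Mathlib

section
/- Let G be a finite simple graph satisfying the Laman conditions and let γ be an automorphism of G with γ³ = id. Then every (C₃,γ) Δ extension of G satisfies the Laman conditions. -/
open Matrix

noncomputable section

namespace C3Laman

variable {V : Type*} [Fintype V] [DecidableEq V]

/-- The Laman conditions: `|E(G)| = 2|V(G)| - 3`, and `|E(H)| ≤ 2|V(H)| - 3` for every
subgraph `H` of `G` with at least two vertices. -/
def Laman (G : SimpleGraph V) : Prop :=
  (G.edgeSet.ncard : ℤ) = 2 * Fintype.card V - 3 ∧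
  ∀ H : G.Subgraph, 2 ≤ H.verts.ncard →
    (H.edgeSet.ncard : ℤ) ≤ 2 * (H.verts.ncard : ℤ) - 3

/-- A `(C₃, γ)` Δ extension of `G` on a base vertex `v₀` (with `γ v₀ ≠ v₀`), realized on
the vertex type `V ⊕ Fin 3` with the three new vertices `Sum.inr 0, Sum.inr 1,
Sum.inr 2`: a triangle on the new vertices is added, together with the three edges
joining them to `v₀, γ v₀, γ² v₀` respectively. -/
def deltaExtensionGraph (G : SimpleGraph V) (γ : G ≃g G) (v₀ : V) :
    SimpleGraph (V ⊕ Fin 3) :=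
  SimpleGraph.fromEdgeSet
    (Sym2.map Sum.inl '' G.edgeSet ∪
      {s((Sum.inr 0 : V ⊕ Fin 3), (Sum.inr 1 : V ⊕ Fin 3)),
       s((Sum.inr 1 : V ⊕ Fin 3), (Sum.inr 2 : V ⊕ Fin 3)),
       s((Sum.inr 2 : V ⊕ Fin 3), (Sum.inr 0 : V ⊕ Fin 3)),
       s((Sum.inr 0 : V ⊕ Fin 3), Sum.inl v₀),
       s((Sum.inr 1 : V ⊕ Fin 3), Sum.inl (γ v₀)),
       s((Sum.inr 2 : V ⊕ Fin 3), Sum.inl (γ (γ v₀)))})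

private lemma two_le_ncard' {X : Type*} {s : Set X} (hfin : s.Finite) {x y : X}
    (hxy : x ≠ y) (hx : x ∈ s) (hy : y ∈ s) : 2 ≤ s.ncard := by
  have hsub : ({x, y} : Set X) ⊆ s := by
    intro z hz
    simp only [Set.mem_insert_iff, Set.mem_singleton_iff] at hz
    rcases hz with rfl | rfl <;> assumption
  calc 2 = ({x, y} : Set X).ncard := (Set.ncard_pair hxy).symm
    _ ≤ s.ncard := Set.ncard_le_ncard hsub hfin

private lemma three_le_ncard' {X : Type*} {s : Set X} (hfin : s.Finite) {x y z : X}
    (hxy : x ≠ y) (hxz : x ≠ z) (hyz : y ≠ z)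
    (hx : x ∈ s) (hy : y ∈ s) (hz : z ∈ s) : 3 ≤ s.ncard := by
  have hsub : ({x, y, z} : Set X) ⊆ s := by
    intro w hw
    simp only [Set.mem_insert_iff, Set.mem_singleton_iff] at hw
    rcases hw with rfl | rfl | rfl <;> assumption
  have h3 : ({x, y, z} : Set X).ncard = 3 := by
    rw [Set.ncard_insert_of_notMem (by simp [hxy, hxz]) (Set.toFinite _),
      Set.ncard_pair hyz]
  calc 3 = ({x, y, z} : Set X).ncard := h3.symm
    _ ≤ s.ncard := Set.ncard_le_ncard hsub hfin

private lemma inr_not_mem_image {i : Fin 3} {x : V ⊕ Fin 3} (S : Set (Sym2 V)) :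
    s(Sum.inr i, x) ∉ Sym2.map Sum.inl '' S := by
  rintro ⟨e', -, heq⟩
  induction e' using Sym2.ind with
  | _ a b =>
    rw [Sym2.map_pair_eq, Sym2.eq_iff] at heq
    rcases heq with ⟨h, -⟩ | ⟨-, h⟩ <;> simp at h

lemma edgeSet_delta (G : SimpleGraph V) (γ : G ≃g G) (v₀ : V) :
    (deltaExtensionGraph G γ v₀).edgeSet =
      Sym2.map Sum.inl '' G.edgeSet ∪
      {s((Sum.inr 0 : V ⊕ Fin 3), (Sum.inr 1 : V ⊕ Fin 3)),
       s((Sum.inr 1 : V ⊕ Fin 3), (Sum.inr 2 : V ⊕ Fin 3)),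
       s((Sum.inr 2 : V ⊕ Fin 3), (Sum.inr 0 : V ⊕ Fin 3)),
       s((Sum.inr 0 : V ⊕ Fin 3), Sum.inl v₀),
       s((Sum.inr 1 : V ⊕ Fin 3), Sum.inl (γ v₀)),
       s((Sum.inr 2 : V ⊕ Fin 3), Sum.inl (γ (γ v₀)))} := by
  rw [deltaExtensionGraph, SimpleGraph.edgeSet_fromEdgeSet]
  rw [sdiff_eq_self_iff_disjoint]
  rw [Set.disjoint_left]
  intro e he hmem
  rcases hmem with ⟨e', he', rfl⟩ | hmem
  · rw [Sym2.mem_diagSet, Sym2.isDiag_map Sum.inl_injective] at he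
    exact (SimpleGraph.not_isDiag_of_mem_edgeSet G he') he
  · simp only [Set.mem_insert_iff, Set.mem_singleton_iff] at hmem
    rcases hmem with rfl | rfl | rfl | rfl | rfl | rfl <;>
      simp [Set.mem_setOf_eq, Sym2.mk_isDiag_iff] at he

/-- The subgraph of `G` induced by a subgraph of the Δ extension on the old vertices. -/
def pullbackSubgraph (G : SimpleGraph V) (γ : G ≃g G) (v₀ : V)
    (H : (deltaExtensionGraph G γ v₀).Subgraph) : G.Subgraph where
  verts := Sum.inl ⁻¹' H.verts
  Adj a b := H.Adj (Sum.inl a) (Sum.inl b)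
  adj_sub := by
    intro a b hab
    have h := H.adj_sub hab
    rw [deltaExtensionGraph, SimpleGraph.fromEdgeSet_adj] at h
    obtain ⟨hm, -⟩ := h
    rcases hm with ⟨e', he', heq⟩ | hm
    · induction e' using Sym2.ind with
      | _ x y =>
        rw [Sym2.map_pair_eq, Sym2.eq_iff] at heq
        rcases heq with ⟨h1, h2⟩ | ⟨h1, h2⟩
        · obtain rfl := Sum.inl_injective h1
          obtain rfl := Sum.inl_injective h2
          exact G.mem_edgeSet.mp he'
        · obtain rfl := Sum.inl_injective h1
          obtain rfl := Sum.inl_injective h2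
          exact (G.mem_edgeSet.mp he').symm
    · exfalso
      simp only [Set.mem_insert_iff, Set.mem_singleton_iff, Sym2.eq_iff] at hm
      simp at hm
  edge_vert := fun h => H.edge_vert h
  symm := ⟨fun a b h => H.adj_symm h⟩

/-- If `G` satisfies the Laman conditions and `γ` is an automorphism of `G` with
`γ³ = id`, then every `(C₃, γ)` Δ extension of `G` satisfies the Laman conditions. -/
theorem c3_delta_extension_laman {V : Type*} [Fintype V] [DecidableEq V]
    (G : SimpleGraph V) (γ : G ≃g G) (hγ3 : ∀ v, γ (γ (γ v)) = v)
    (hlaman : Laman G) (v₀ : V) (hfix : γ v₀ ≠ v₀) :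
    Laman (deltaExtensionGraph G γ v₀) := by
  classical
  -- distinctness of attachment vertices
  have hd10 : γ v₀ ≠ v₀ := hfix
  have hd21 : γ (γ v₀) ≠ γ v₀ := fun h => hfix (γ.toEquiv.injective h)
  have hd20 : γ (γ v₀) ≠ v₀ := by
    intro h
    have := congrArg γ h
    rw [hγ3] at this
    exact hfix this.symm
  constructor
  · -- edge count of the extension
    rw [edgeSet_delta]
    have hdisj : Disjoint (Sym2.map Sum.inl '' G.edgeSet)
        ({s((Sum.inr 0 : V ⊕ Fin 3), (Sum.inr 1 : V ⊕ Fin 3)),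
          s((Sum.inr 1 : V ⊕ Fin 3), (Sum.inr 2 : V ⊕ Fin 3)),
          s((Sum.inr 2 : V ⊕ Fin 3), (Sum.inr 0 : V ⊕ Fin 3)),
          s((Sum.inr 0 : V ⊕ Fin 3), Sum.inl v₀),
          s((Sum.inr 1 : V ⊕ Fin 3), Sum.inl (γ v₀)),
          s((Sum.inr 2 : V ⊕ Fin 3), Sum.inl (γ (γ v₀)))} : Set (Sym2 (V ⊕ Fin 3))) := by
      rw [Set.disjoint_right]
      intro e he
      simp only [Set.mem_insert_iff, Set.mem_singleton_iff] at he
      rcases he with rfl | rfl | rfl | rfl | rfl | rfl <;>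
        exact inr_not_mem_image _
    have h6 : ({s((Sum.inr 0 : V ⊕ Fin 3), (Sum.inr 1 : V ⊕ Fin 3)),
          s((Sum.inr 1 : V ⊕ Fin 3), (Sum.inr 2 : V ⊕ Fin 3)),
          s((Sum.inr 2 : V ⊕ Fin 3), (Sum.inr 0 : V ⊕ Fin 3)),
          s((Sum.inr 0 : V ⊕ Fin 3), Sum.inl v₀),
          s((Sum.inr 1 : V ⊕ Fin 3), Sum.inl (γ v₀)),
          s((Sum.inr 2 : V ⊕ Fin 3), Sum.inl (γ (γ v₀)))} : Set (Sym2 (V ⊕ Fin 3))).ncard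
        = 6 := by
      rw [Set.ncard_insert_of_notMem (by simp [Sym2.eq_iff]) (Set.toFinite _),
        Set.ncard_insert_of_notMem (by simp [Sym2.eq_iff]) (Set.toFinite _),
        Set.ncard_insert_of_notMem (by simp [Sym2.eq_iff]) (Set.toFinite _),
        Set.ncard_insert_of_notMem (by simp [Sym2.eq_iff]) (Set.toFinite _),
        Set.ncard_insert_of_notMem (by simp [Sym2.eq_iff]) (Set.toFinite _),
        Set.ncard_singleton]
    rw [Set.ncard_union_eq hdisj (Set.toFinite _) (Set.toFinite _),
      Set.ncard_image_of_injective _ (Sym2.map.injective Sum.inl_injective), h6]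
    have h1 := hlaman.1
    have hcard : Fintype.card (V ⊕ Fin 3) = Fintype.card V + 3 := by
      rw [Fintype.card_sum, Fintype.card_fin]
    rw [hcard]
    push_cast
    omega
  · -- subgraph condition
    intro H hH
    set A : Set V := Sum.inl ⁻¹' H.verts with hA
    set B : Set (Fin 3) := Sum.inr ⁻¹' H.verts with hBdef
    -- vertex count
    have hvcard : H.verts.ncard = A.ncard + B.ncard := by
      have hvrw : H.verts = Sum.inl '' A ∪ Sum.inr '' B := by
        ext x
        cases x <;> simp [hA, hBdef]
      rw [hvrw, Set.ncard_union_eq ?_ (Set.toFinite _) (Set.toFinite _),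
        Set.ncard_image_of_injective _ Sum.inl_injective,
        Set.ncard_image_of_injective _ Sum.inr_injective]
      rw [Set.disjoint_left]
      rintro x ⟨a, -, rfl⟩ ⟨b, -, h⟩
      exact Sum.inl_ne_inr h.symm
    have hkle : B.ncard ≤ 3 := by
      calc B.ncard ≤ (Set.univ : Set (Fin 3)).ncard :=
            Set.ncard_le_ncard (Set.subset_univ _) (Set.toFinite _)
        _ = 3 := by rw [Set.ncard_univ]; simp
    -- the restricted subgraph
    set H₀ : G.Subgraph := pullbackSubgraph G γ v₀ H with hH₀
    have hE0 : (2 ≤ A.ncard ∧ (H₀.edgeSet.ncard : ℤ) ≤ 2 * A.ncard - 3) ∨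
        (A.ncard ≤ 1 ∧ H₀.edgeSet.ncard = 0) := by
      by_cases h2 : 2 ≤ A.ncard
      · exact Or.inl ⟨h2, hlaman.2 H₀ h2⟩
      · refine Or.inr ⟨by omega, ?_⟩
        have hempty : H₀.edgeSet = ∅ := by
          ext e
          simp only [Set.mem_empty_iff_false, iff_false]
          induction e using Sym2.ind with
          | _ x y =>
            intro he
            rw [SimpleGraph.Subgraph.mem_edgeSet] at he
            have hxy : x ≠ y := (H₀.adj_sub he).ne
            have hx : x ∈ A := H₀.edge_vert he
            have hy : y ∈ A := H₀.edge_vert he.symm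
            exact h2 (two_le_ncard' (Set.toFinite _) hxy hx hy)
        rw [hempty, Set.ncard_empty]
    -- endpoints of edges are vertices
    have hPvert : ∀ x y : V ⊕ Fin 3, s(x, y) ∈ H.edgeSet → x ∈ H.verts ∧ y ∈ H.verts := by
      intro x y h
      rw [SimpleGraph.Subgraph.mem_edgeSet] at h
      exact ⟨H.edge_vert h, H.edge_vert h.symm⟩
    have hBmem : ∀ (i : Fin 3) (x : V ⊕ Fin 3), s(Sum.inr i, x) ∈ H.edgeSet → i ∈ B :=
      fun i x h => (hPvert _ _ h).1
    have hBmem' : ∀ (i : Fin 3) (x : V ⊕ Fin 3), s(x, Sum.inr i) ∈ H.edgeSet → i ∈ B :=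
      fun i x h => (hPvert _ _ h).2
    have hAmem : ∀ (u : V) (x : V ⊕ Fin 3), s(x, Sum.inl u) ∈ H.edgeSet → u ∈ A :=
      fun u x h => (hPvert _ _ h).2
    -- the triangle and attachment edge sets
    set T : Set (Sym2 (V ⊕ Fin 3)) :=
      {s((Sum.inr 0 : V ⊕ Fin 3), (Sum.inr 1 : V ⊕ Fin 3)),
       s((Sum.inr 1 : V ⊕ Fin 3), (Sum.inr 2 : V ⊕ Fin 3)),
       s((Sum.inr 2 : V ⊕ Fin 3), (Sum.inr 0 : V ⊕ Fin 3))} with hT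
    set At : Set (Sym2 (V ⊕ Fin 3)) :=
      {s((Sum.inr 0 : V ⊕ Fin 3), Sum.inl v₀),
       s((Sum.inr 1 : V ⊕ Fin 3), Sum.inl (γ v₀)),
       s((Sum.inr 2 : V ⊕ Fin 3), Sum.inl (γ (γ v₀)))} with hAt
    -- edge decomposition
    have hsub : H.edgeSet ⊆ Sym2.map Sum.inl '' H₀.edgeSet ∪ (T ∩ H.edgeSet ∪ At ∩ H.edgeSet) := by
      intro e he
      have he' := H.edgeSet_subset he
      rw [edgeSet_delta] at he'
      rcases he' with ⟨e', he', rfl⟩ | hm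
      · left
        induction e' using Sym2.ind with
        | _ x y =>
          rw [Sym2.map_pair_eq] at he
          refine ⟨s(x, y), ?_, (Sym2.map_pair_eq _ _ _).symm ▸ rfl⟩
          rw [SimpleGraph.Subgraph.mem_edgeSet] at he ⊢
          exact he
      · right
        simp only [Set.mem_insert_iff, Set.mem_singleton_iff] at hm
        rcases hm with rfl | rfl | rfl | rfl | rfl | rfl
        · exact Or.inl ⟨by rw [hT]; left; rfl, he⟩
        · exact Or.inl ⟨by rw [hT]; right; left; rfl, he⟩
        · exact Or.inl ⟨by rw [hT]; right; right; rfl, he⟩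
        · exact Or.inr ⟨by rw [hAt]; left; rfl, he⟩
        · exact Or.inr ⟨by rw [hAt]; right; left; rfl, he⟩
        · exact Or.inr ⟨by rw [hAt]; right; right; rfl, he⟩
    have hEH : H.edgeSet.ncard ≤ H₀.edgeSet.ncard +
        ((T ∩ H.edgeSet).ncard + (At ∩ H.edgeSet).ncard) := by
      have h1 := Set.ncard_le_ncard hsub (Set.toFinite _)
      have h2 := Set.ncard_union_le (Sym2.map Sum.inl '' H₀.edgeSet)
        (T ∩ H.edgeSet ∪ At ∩ H.edgeSet)
      have h3 := Set.ncard_union_le (T ∩ H.edgeSet) (At ∩ H.edgeSet)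
      have h4 := Set.ncard_image_of_injective H₀.edgeSet
        (Sym2.map.injective (Sum.inl_injective : Function.Injective (Sum.inl : V → V ⊕ Fin 3)))
      omega
    -- triangle bounds
    have htle : (T ∩ H.edgeSet).ncard ≤ 3 := by
      calc (T ∩ H.edgeSet).ncard ≤ T.ncard :=
            Set.ncard_le_ncard Set.inter_subset_left (Set.toFinite _)
        _ ≤ 3 := by
            rw [hT]
            refine le_trans (Set.ncard_insert_le _ _) ?_
            have := Set.ncard_insert_le (s((Sum.inr 1 : V ⊕ Fin 3), (Sum.inr 2 : V ⊕ Fin 3)))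
              ({s((Sum.inr 2 : V ⊕ Fin 3), (Sum.inr 0 : V ⊕ Fin 3))} : Set (Sym2 (V ⊕ Fin 3)))
            have h1 := Set.ncard_singleton (s((Sum.inr 2 : V ⊕ Fin 3), (Sum.inr 0 : V ⊕ Fin 3)))
            omega
    have ht1 : 1 ≤ (T ∩ H.edgeSet).ncard → 2 ≤ B.ncard := by
      intro ht
      have hpos : 0 < (T ∩ H.edgeSet).ncard := by omega
      obtain ⟨e, heT, heE⟩ := (Set.ncard_pos (Set.toFinite _)).mp hpos
      rw [hT] at heT
      simp only [Set.mem_insert_iff, Set.mem_singleton_iff] at heT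
      rcases heT with rfl | rfl | rfl
      · exact two_le_ncard' (Set.toFinite _) (by decide)
          (hBmem 0 _ heE) (hBmem' 1 _ heE)
      · exact two_le_ncard' (Set.toFinite _) (by decide)
          (hBmem 1 _ heE) (hBmem' 2 _ heE)
      · exact two_le_ncard' (Set.toFinite _) (by decide)
          (hBmem 2 _ heE) (hBmem' 0 _ heE)
    have ht2 : 2 ≤ (T ∩ H.edgeSet).ncard → 3 ≤ B.ncard := by
      intro ht
      have hpos : 1 < (T ∩ H.edgeSet).ncard := by omega
      obtain ⟨e, heM, f, hfM, hef⟩ := (Set.one_lt_ncard (Set.toFinite _)).mp hpos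
      obtain ⟨heT, heE⟩ := heM
      obtain ⟨hfT, hfE⟩ := hfM
      rw [hT] at heT hfT
      simp only [Set.mem_insert_iff, Set.mem_singleton_iff] at heT hfT
      have hB3 : (0 : Fin 3) ∈ B → (1 : Fin 3) ∈ B → (2 : Fin 3) ∈ B → 3 ≤ B.ncard :=
        fun h0 h1 h2 => three_le_ncard' (Set.toFinite _)
          (by decide) (by decide) (by decide) h0 h1 h2
      rcases heT with rfl | rfl | rfl <;> rcases hfT with rfl | rfl | rfl
      · exact absurd rfl hef
      · exact hB3 (hBmem 0 _ heE) (hBmem' 1 _ heE) (hBmem' 2 _ hfE)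
      · exact hB3 (hBmem 0 _ heE) (hBmem' 1 _ heE) (hBmem 2 _ hfE)
      · exact hB3 (hBmem 0 _ hfE) (hBmem' 1 _ hfE) (hBmem' 2 _ heE)
      · exact absurd rfl hef
      · exact hB3 (hBmem' 0 _ hfE) (hBmem 1 _ heE) (hBmem' 2 _ heE)
      · exact hB3 (hBmem 0 _ hfE) (hBmem' 1 _ hfE) (hBmem 2 _ heE)
      · exact hB3 (hBmem' 0 _ heE) (hBmem 1 _ hfE) (hBmem' 2 _ hfE)
      · exact absurd rfl hef
    -- attachment bounds
    have hale : (At ∩ H.edgeSet).ncard ≤ 3 := by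
      calc (At ∩ H.edgeSet).ncard ≤ At.ncard :=
            Set.ncard_le_ncard Set.inter_subset_left (Set.toFinite _)
        _ ≤ 3 := by
            rw [hAt]
            refine le_trans (Set.ncard_insert_le _ _) ?_
            have := Set.ncard_insert_le (s((Sum.inr 1 : V ⊕ Fin 3), Sum.inl (γ v₀)))
              ({s((Sum.inr 2 : V ⊕ Fin 3), Sum.inl (γ (γ v₀)))} : Set (Sym2 (V ⊕ Fin 3)))
            have h1 := Set.ncard_singleton (s((Sum.inr 2 : V ⊕ Fin 3), Sum.inl (γ (γ v₀))))
            omega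
    have ha1 : 1 ≤ (At ∩ H.edgeSet).ncard → 1 ≤ B.ncard ∧ 1 ≤ A.ncard := by
      intro ha
      have hpos : 0 < (At ∩ H.edgeSet).ncard := by omega
      obtain ⟨e, heT, heE⟩ := (Set.ncard_pos (Set.toFinite _)).mp hpos
      rw [hAt] at heT
      simp only [Set.mem_insert_iff, Set.mem_singleton_iff] at heT
      have hone : ∀ (i : Fin 3) (u : V), i ∈ B → u ∈ A → 1 ≤ B.ncard ∧ 1 ≤ A.ncard :=
        fun i u hi hu => ⟨(Set.ncard_pos (Set.toFinite _)).mpr ⟨i, hi⟩,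
          (Set.ncard_pos (Set.toFinite _)).mpr ⟨u, hu⟩⟩
      rcases heT with rfl | rfl | rfl
      · exact hone 0 v₀ (hBmem 0 _ heE) (hAmem _ _ heE)
      · exact hone 1 (γ v₀) (hBmem 1 _ heE) (hAmem _ _ heE)
      · exact hone 2 (γ (γ v₀)) (hBmem 2 _ heE) (hAmem _ _ heE)
    have ha2 : 2 ≤ (At ∩ H.edgeSet).ncard → 2 ≤ B.ncard ∧ 2 ≤ A.ncard := by
      intro ha
      have hpos : 1 < (At ∩ H.edgeSet).ncard := by omega
      obtain ⟨e, heM, f, hfM, hef⟩ := (Set.one_lt_ncard (Set.toFinite _)).mp hpos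
      obtain ⟨heT, heE⟩ := heM
      obtain ⟨hfT, hfE⟩ := hfM
      rw [hAt] at heT hfT
      simp only [Set.mem_insert_iff, Set.mem_singleton_iff] at heT hfT
      have pair : ∀ (i j : Fin 3) (u w : V), i ≠ j → u ≠ w → i ∈ B → j ∈ B →
          u ∈ A → w ∈ A → 2 ≤ B.ncard ∧ 2 ≤ A.ncard :=
        fun i j u w hij huw hi hj hu hw =>
          ⟨two_le_ncard' (Set.toFinite _) hij hi hj,
           two_le_ncard' (Set.toFinite _) huw hu hw⟩
      rcases heT with rfl | rfl | rfl <;> rcases hfT with rfl | rfl | rfl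
      · exact absurd rfl hef
      · exact pair 0 1 v₀ (γ v₀) (by decide) (Ne.symm hd10) (hBmem 0 _ heE)
          (hBmem 1 _ hfE) (hAmem _ _ heE) (hAmem _ _ hfE)
      · exact pair 0 2 v₀ (γ (γ v₀)) (by decide) (Ne.symm hd20) (hBmem 0 _ heE)
          (hBmem 2 _ hfE) (hAmem _ _ heE) (hAmem _ _ hfE)
      · exact pair 0 1 v₀ (γ v₀) (by decide) (Ne.symm hd10) (hBmem 0 _ hfE)
          (hBmem 1 _ heE) (hAmem _ _ hfE) (hAmem _ _ heE)
      · exact absurd rfl hef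
      · exact pair 1 2 (γ v₀) (γ (γ v₀)) (by decide) (Ne.symm hd21) (hBmem 1 _ heE)
          (hBmem 2 _ hfE) (hAmem _ _ heE) (hAmem _ _ hfE)
      · exact pair 0 2 v₀ (γ (γ v₀)) (by decide) (Ne.symm hd20) (hBmem 0 _ hfE)
          (hBmem 2 _ heE) (hAmem _ _ hfE) (hAmem _ _ heE)
      · exact pair 1 2 (γ v₀) (γ (γ v₀)) (by decide) (Ne.symm hd21) (hBmem 1 _ hfE)
          (hBmem 2 _ heE) (hAmem _ _ hfE) (hAmem _ _ heE)
      · exact absurd rfl hef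
    have ha3 : 3 ≤ (At ∩ H.edgeSet).ncard → 3 ≤ B.ncard ∧ 3 ≤ A.ncard := by
      intro ha
      have hAt3 : At.ncard ≤ 3 := by
        rw [hAt]
        refine le_trans (Set.ncard_insert_le _ _) ?_
        have := Set.ncard_insert_le (s((Sum.inr 1 : V ⊕ Fin 3), Sum.inl (γ v₀)))
          ({s((Sum.inr 2 : V ⊕ Fin 3), Sum.inl (γ (γ v₀)))} : Set (Sym2 (V ⊕ Fin 3)))
        have h1 := Set.ncard_singleton (s((Sum.inr 2 : V ⊕ Fin 3), Sum.inl (γ (γ v₀))))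
        omega
      have heq : At ∩ H.edgeSet = At :=
        Set.eq_of_subset_of_ncard_le Set.inter_subset_left (by omega) (Set.toFinite _)
      have hsubE : At ⊆ H.edgeSet := by
        rw [← heq]; exact Set.inter_subset_right
      have he0 : s((Sum.inr 0 : V ⊕ Fin 3), Sum.inl v₀) ∈ H.edgeSet :=
        hsubE (by rw [hAt]; left; rfl)
      have he1 : s((Sum.inr 1 : V ⊕ Fin 3), Sum.inl (γ v₀)) ∈ H.edgeSet :=
        hsubE (by rw [hAt]; right; left; rfl)
      have he2 : s((Sum.inr 2 : V ⊕ Fin 3), Sum.inl (γ (γ v₀))) ∈ H.edgeSet :=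
        hsubE (by rw [hAt]; right; right; rfl)
      constructor
      · exact three_le_ncard' (Set.toFinite _) (by decide) (by decide) (by decide)
          (hBmem 0 _ he0) (hBmem 1 _ he1) (hBmem 2 _ he2)
      · exact three_le_ncard' (Set.toFinite _) (Ne.symm hd10) (Ne.symm hd20) (Ne.symm hd21)
          (hAmem _ _ he0) (hAmem _ _ he1) (hAmem _ _ he2)
    -- conclude
    rw [hvcard] at hH ⊢
    rcases hE0 with ⟨hn2, hle⟩ | ⟨hn1, hzero⟩
    · push_cast at hle ⊢
      omega
    · rw [hzero] at hEH
      push_cast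
      omega

end C3Laman
end
end

section
/- Let G be a finite simple graph with a 3Tree2 partition into edge-disjoint trees T₀, T₁, T₂. Set q₀ = (−1/2, √3/2), q₁ = (−1/2, −√3/2), q₂ = (1, 0) in ℝ², and for each edge b of G choose an orientation (u_b, v_b) of b. For each edge b ∈ E(Tᵢ) define the vector F_b ∈ (ℝ²)^{V(G)} by F_b(u_b) = qᵢ, F_b(v_b) = −qᵢ, and F_b(x) = 0 for all other vertices x. Then the family of vectors (F_b)_{b ∈ E(G)} is linearly independent. -/
open Matrix

noncomputable section

namespace C3Laman

variable {V : Type*} [Fintype V] [DecidableEq V]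

/-- A 3Tree2 partition of `G`: three subtrees of `G` such that every edge of `G` lies in
exactly one of them, and every vertex of `G` lies in exactly two of them. -/
def Is3Tree2Partition (G : SimpleGraph V) (T : Fin 3 → G.Subgraph) : Prop :=
  (∀ i, (T i).coe.IsTree) ∧
  (∀ e ∈ G.edgeSet, ∃! i : Fin 3, e ∈ (T i).edgeSet) ∧
  ∀ v : V, ({i : Fin 3 | v ∈ (T i).verts}).ncard = 2

/-- A proper 3Tree2 partition: no non-trivial subtrees of distinct trees have the same
vertex set. -/
def IsProper3Tree2Partition (G : SimpleGraph V) (T : Fin 3 → G.Subgraph) : Prop :=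
  Is3Tree2Partition G T ∧
  ∀ i j : Fin 3, i ≠ j → ∀ Si Sj : G.Subgraph, Si ≤ T i → Sj ≤ T j →
    Si.coe.IsTree → Sj.coe.IsTree →
    2 ≤ Si.verts.ncard → 2 ≤ Sj.verts.ncard → Si.verts ≠ Sj.verts

/-- A `(C₃, γ)` 3Tree2 partition: a 3Tree2 partition with `γ(Tᵢ) = T_{i+1}` (mod 3). -/
def IsC3_3Tree2Partition (G : SimpleGraph V) (γ : G ≃g G) (T : Fin 3 → G.Subgraph) : Prop :=
  Is3Tree2Partition G T ∧ ∀ i : Fin 3, (T i).map γ.toHom = T (i + 1)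

/-- Let `G` have a 3Tree2 partition into trees `T 0, T 1, T 2`, let
`q 0 = (-1/2, √3/2)`, `q 1 = (-1/2, -√3/2)`, `q 2 = (1, 0)`, choose an orientation
`o e = (u_e, v_e)` of each edge `e` of `G`, and let `F e` be the vector in
`(ℝ²)^{V(G)}` whose value at `u_e` is `q i`, at `v_e` is `-q i` (where `i` is the index
of the tree containing `e`), and `0` at all other vertices.  Then the family
`(F e)_{e ∈ E(G)}` is linearly independent. -/
theorem threeTree2_rows_linearIndependent {V : Type*} [Fintype V] [DecidableEq V]
    (G : SimpleGraph V) (T : Fin 3 → G.Subgraph)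
    (hT : Is3Tree2Partition G T)
    (q : Fin 3 → Fin 2 → ℝ)
    (hq0 : q 0 = ![-(1/2 : ℝ), Real.sqrt 3 / 2])
    (hq1 : q 1 = ![-(1/2 : ℝ), -(Real.sqrt 3 / 2)])
    (hq2 : q 2 = ![(1 : ℝ), 0])
    (o : G.edgeSet → V × V)
    (ho : ∀ e : G.edgeSet, s((o e).1, (o e).2) = (e : Sym2 V))
    (F : G.edgeSet → V → Fin 2 → ℝ)
    (hF : ∀ (e : G.edgeSet) (i : Fin 3), (e : Sym2 V) ∈ (T i).edgeSet →
      F e = fun x => if x = (o e).1 then q i else if x = (o e).2 then -q i else 0) :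
    LinearIndependent ℝ F := by
  classical
  haveI : Fintype G.edgeSet := Fintype.ofFinite _
  -- dot product on ℝ²
  set d : (Fin 2 → ℝ) → (Fin 2 → ℝ) → ℝ := fun a b => a 0 * b 0 + a 1 * b 1 with hd
  have hdot : ∀ a b : Fin 3, d (q a) (q b) = if a = b then 1 else -(1/2) := by
    have h3 : Real.sqrt 3 * Real.sqrt 3 = 3 := Real.mul_self_sqrt (by norm_num)
    intro a b
    fin_cases a <;> fin_cases b <;> simp [hd, hq0, hq1, hq2] <;> nlinarith [h3]
  rw [Fintype.linearIndependent_iff]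
  intro g hg e₀
  have hg' : ∀ (x : V) (c : Fin 2), ∑ e : G.edgeSet, g e * F e x c = 0 := by
    intro x c
    have h := congrFun (congrFun hg x) c
    simpa using h
  obtain ⟨i, hi, hiu⟩ := hT.2.1 (e₀ : Sym2 V) e₀.2
  have hadj₀ : (T i).Adj (o e₀).1 (o e₀).2 :=
    SimpleGraph.Subgraph.mem_edgeSet.mp (by rw [ho e₀]; exact hi)
  have hu₀ : (o e₀).1 ∈ (T i).verts := hadj₀.fst_mem
  have hv₀ : (o e₀).2 ∈ (T i).verts := hadj₀.snd_mem
  set Gi := (T i).coe with hGi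
  set U₀ : (T i).verts := ⟨(o e₀).1, hu₀⟩ with hU₀
  set V₀ : (T i).verts := ⟨(o e₀).2, hv₀⟩ with hV₀
  set G' := Gi \ SimpleGraph.fromEdgeSet {s(U₀, V₀)} with hG'
  set A : Set V := {x | ∃ h : x ∈ (T i).verts, G'.Reachable U₀ ⟨x, h⟩} with hA
  have hA_sub : ∀ x ∈ A, x ∈ (T i).verts := fun x hx => hx.choose
  have hu₀A : (o e₀).1 ∈ A := ⟨hu₀, SimpleGraph.Reachable.refl _⟩
  have hv₀A : (o e₀).2 ∉ A := by
    rintro ⟨h, hr⟩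
    have hedge : s(U₀, V₀) ∈ Gi.edgeSet := hadj₀
    have hbridge : Gi.IsBridge s(U₀, V₀) :=
      (SimpleGraph.isAcyclic_iff_forall_edge_isBridge.mp (hT.1 i).IsAcyclic) hedge
    exact (SimpleGraph.isBridge_iff.mp hbridge) hr
  -- edges of T i other than e₀ do not cross the cut A
  have hAedge : ∀ (e : G.edgeSet), e ≠ e₀ → (e : Sym2 V) ∈ (T i).edgeSet →
      ((o e).1 ∈ A ↔ (o e).2 ∈ A) := by
    intro e hne hei
    have hadj : (T i).Adj (o e).1 (o e).2 :=
      SimpleGraph.Subgraph.mem_edgeSet.mp (by rw [ho e]; exact hei)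
    have h1 := hadj.fst_mem
    have h2 := hadj.snd_mem
    have hGadj : G'.Adj ⟨(o e).1, h1⟩ ⟨(o e).2, h2⟩ := by
      rw [hG', SimpleGraph.sdiff_adj]
      refine ⟨hadj, ?_⟩
      rw [SimpleGraph.fromEdgeSet_adj]
      rintro ⟨hmem, -⟩
      rw [Set.mem_singleton_iff] at hmem
      apply hne
      apply Subtype.ext
      have h4 := congrArg (Sym2.map (Subtype.val)) hmem
      rw [Sym2.map_pair_eq, Sym2.map_pair_eq] at h4
      simp only [hU₀, hV₀] at h4
      rw [← ho e, ← ho e₀]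
      exact h4
    constructor
    · rintro ⟨hh, hr⟩
      exact ⟨h2, hr.trans hGadj.reachable⟩
    · rintro ⟨hh, hr⟩
      exact ⟨h1, hr.trans hGadj.symm.reachable⟩
  -- the dual vectors
  set pf : Fin 3 → Fin 2 → ℝ := fun k c => (2/3) * (2 * q i c + q k c) with hpf
  set pvec : V → Fin 2 → ℝ :=
    fun x => ∑ k : Fin 3, if k ≠ i ∧ x ∈ (T k).verts then pf k else 0 with hpvec
  have expand : ∀ j m, d (pf j) (q m) = (2/3) * (2 * d (q i) (q m) + d (q j) (q m)) := by
    intro j m; simp only [hd, hpf]; ring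
  have hpf_qi : ∀ j, j ≠ i → d (pf j) (q i) = 1 := by
    intro j hj; rw [expand, hdot i i, hdot j i, if_pos rfl, if_neg hj]; norm_num
  have hpf_qj : ∀ j, j ≠ i → d (pf j) (q j) = 0 := by
    intro j hj; rw [expand, hdot i j, hdot j j, if_neg (Ne.symm hj), if_pos rfl]; norm_num
  have hother : ∀ x, x ∈ (T i).verts → ∃ j, j ≠ i ∧ pvec x = pf j ∧
      (∀ k, k ≠ i → x ∈ (T k).verts → k = j) := by
    intro x hx
    obtain ⟨a, b, hab, hset⟩ := Set.ncard_eq_two.mp (hT.2.2 x)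
    have hi' : i ∈ ({k | x ∈ (T k).verts} : Set (Fin 3)) := hx
    rw [hset] at hi'
    have key : ∃ j, j ≠ i ∧ x ∈ (T j).verts ∧ ({a, b} : Set (Fin 3)) = {i, j} := by
      rcases hi' with rfl | rfl
      · refine ⟨b, fun hbe => hab hbe.symm, ?_, rfl⟩
        have : b ∈ ({k | x ∈ (T k).verts} : Set (Fin 3)) := by rw [hset]; right; rfl
        exact this
      · refine ⟨a, fun hae => hab hae, ?_, by rw [Set.pair_comm]⟩
        have : a ∈ ({k | x ∈ (T k).verts} : Set (Fin 3)) := by rw [hset]; left; rfl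
        exact this
    obtain ⟨j, hji, hxj, hpair⟩ := key
    refine ⟨j, hji, ?_, ?_⟩
    · have hiff : ∀ k : Fin 3, (k ≠ i ∧ x ∈ (T k).verts) ↔ k = j := by
        intro k
        constructor
        · rintro ⟨hki, hxk⟩
          have : k ∈ ({a, b} : Set (Fin 3)) := by rw [← hset]; exact hxk
          rw [hpair] at this
          rcases this with rfl | rfl
          · exact absurd rfl hki
          · rfl
        · rintro rfl; exact ⟨hji, hxj⟩
      rw [hpvec]
      simp only [hiff]
      rw [Finset.sum_ite_eq' Finset.univ j pf, if_pos (Finset.mem_univ j)]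
    · intro k hki hxk
      have : k ∈ ({a, b} : Set (Fin 3)) := by rw [← hset]; exact hxk
      rw [hpair] at this
      rcases this with rfl | rfl
      · exact absurd rfl hki
      · rfl
  set χ : V → ℝ := fun x => if x ∈ A then 1 else 0 with hχ
  -- the key evaluation
  have key : ∀ e : G.edgeSet,
      (∑ x : V, χ x * d (pvec x) (F e x)) = if e = e₀ then 1 else 0 := by
    intro e
    obtain ⟨k, hk, -⟩ := hT.2.1 (e : Sym2 V) e.2
    have hadj : (T k).Adj (o e).1 (o e).2 :=
      SimpleGraph.Subgraph.mem_edgeSet.mp (by rw [ho e]; exact hk)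
    have hne : (o e).1 ≠ (o e).2 := hadj.ne
    have hu : (o e).1 ∈ (T k).verts := hadj.fst_mem
    have hv : (o e).2 ∈ (T k).verts := hadj.snd_mem
    have hstep : (∑ x : V, χ x * d (pvec x) (F e x))
        = χ (o e).1 * d (pvec (o e).1) (q k) - χ (o e).2 * d (pvec (o e).2) (q k) := by
      rw [hF e k hk]
      have hterm : ∀ x : V, χ x * d (pvec x)
            (if x = (o e).1 then q k else if x = (o e).2 then -q k else 0)
          = (if x = (o e).1 then χ (o e).1 * d (pvec (o e).1) (q k) else 0) +
            (if x = (o e).2 then -(χ (o e).2 * d (pvec (o e).2) (q k)) else 0) := by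
        intro x
        by_cases h1 : x = (o e).1
        · subst h1
          rw [if_pos rfl, if_pos rfl, if_neg hne]
          ring
        · rw [if_neg h1, if_neg h1]
          by_cases h2 : x = (o e).2
          · subst h2
            rw [if_pos rfl, if_pos rfl]
            simp only [hd, Pi.neg_apply]
            ring
          · rw [if_neg h2, if_neg h2]
            simp only [hd, Pi.zero_apply]
            ring
      calc (∑ x : V, χ x * d (pvec x)
            (if x = (o e).1 then q k else if x = (o e).2 then -q k else 0))
          = ∑ x : V, ((if x = (o e).1 then χ (o e).1 * d (pvec (o e).1) (q k) else 0) +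
              (if x = (o e).2 then -(χ (o e).2 * d (pvec (o e).2) (q k)) else 0)) :=
            Finset.sum_congr rfl (fun x _ => hterm x)
        _ = _ := by
            rw [Finset.sum_add_distrib, Finset.sum_ite_eq' Finset.univ,
              Finset.sum_ite_eq' Finset.univ, if_pos (Finset.mem_univ _),
              if_pos (Finset.mem_univ _)]
            ring
    rw [hstep]
    by_cases hee : e = e₀
    · subst hee
      have hki : k = i := hiu k hk
      subst hki
      obtain ⟨j, hji, hpv, -⟩ := hother (o e).1 hu₀
      rw [if_pos rfl]
      simp only [hχ]
      rw [if_pos hu₀A, if_neg hv₀A]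
      rw [hpv, hpf_qi j hji]
      ring
    · rw [if_neg hee]
      by_cases hki : k = i
      · subst hki
        have hiff := hAedge e hee hk
        obtain ⟨j1, hj1, hpv1, -⟩ := hother (o e).1 hu
        obtain ⟨j2, hj2, hpv2, -⟩ := hother (o e).2 hv
        rw [hpv1, hpv2, hpf_qi j1 hj1, hpf_qi j2 hj2]
        simp only [hχ]
        by_cases hmem : (o e).1 ∈ A
        · rw [if_pos hmem, if_pos (hiff.mp hmem)]; ring
        · rw [if_neg hmem, if_neg (fun h => hmem (hiff.mpr h))]; ring
      · have hz1 : χ (o e).1 * d (pvec (o e).1) (q k) = 0 := by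
          by_cases hmem : (o e).1 ∈ A
          · obtain ⟨j, hji, hpv, huniq⟩ := hother (o e).1 (hA_sub _ hmem)
            have : k = j := huniq k hki hu
            subst this
            rw [hpv, hpf_qj k hji, mul_zero]
          · simp only [hχ]
            rw [if_neg hmem]; ring
        have hz2 : χ (o e).2 * d (pvec (o e).2) (q k) = 0 := by
          by_cases hmem : (o e).2 ∈ A
          · obtain ⟨j, hji, hpv, huniq⟩ := hother (o e).2 (hA_sub _ hmem)
            have : k = j := huniq k hki hv
            subst this
            rw [hpv, hpf_qj k hji, mul_zero]
          · simp only [hχ]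
            rw [if_neg hmem]; ring
        rw [hz1, hz2]; ring
  -- the sum of the functional over the dependency is zero
  have hsum : ∑ e : G.edgeSet, g e * (∑ x : V, χ x * d (pvec x) (F e x)) = 0 := by
    have hx0 : ∀ x : V, ∑ e : G.edgeSet, g e * (χ x * d (pvec x) (F e x)) = 0 := by
      intro x
      have h0 := hg' x 0
      have h1 := hg' x 1
      have : ∑ e : G.edgeSet, g e * (χ x * d (pvec x) (F e x))
          = χ x * (pvec x 0 * (∑ e : G.edgeSet, g e * F e x 0)
            + pvec x 1 * (∑ e : G.edgeSet, g e * F e x 1)) := by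
        rw [Finset.mul_sum, Finset.mul_sum, mul_add, Finset.mul_sum, Finset.mul_sum,
          ← Finset.sum_add_distrib]
        apply Finset.sum_congr rfl
        intro e _
        simp only [hd]
        ring
      rw [this, h0, h1]
      ring
    calc ∑ e : G.edgeSet, g e * (∑ x : V, χ x * d (pvec x) (F e x))
        = ∑ x : V, ∑ e : G.edgeSet, g e * (χ x * d (pvec x) (F e x)) := by
          simp only [Finset.mul_sum]
          exact Finset.sum_comm
      _ = 0 := by simp [hx0]
  calc g e₀ = ∑ e : G.edgeSet, g e * (if e = e₀ then 1 else 0) := by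
        simp [mul_ite]
    _ = ∑ e : G.edgeSet, g e * (∑ x : V, χ x * d (pvec x) (F e x)) :=
        Finset.sum_congr rfl (fun e _ => by rw [key e])
    _ = 0 := hsum

end C3Laman
end
end
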